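/- arXiv:2407.02259 — 2 statements merged into one kernel-verified Lean document; each statement's English description precedes it below -/
import Mathlib

section
/- In the local coordinate model, set Ω₊ = {(t, x, τ, ξ) : x ∈ U, z > 0}, and let ϱ⁰ ∈ H_∂⁻ (respectively ϱ⁰ ∈ H_∂⁺) with x-component in U. Then there exist S₀ > 0 and an open neighbourhood V⁰ of ϱ⁰ contained in H_∂⁻ (respectively in H_∂⁺) such that for every maximal bicharacteristic γ : (s₁, s₂) → Ω₊ in Ω₊ with s₁ < s₂ for which the limit lim_{s→s₂⁻} γ(s) exists and belongs to V⁰ (respectively the limit lim_{s→s₁⁺} γ(s) exists and belongs to V⁰), one has s₂ − s₁ ≥ S₀. -/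
open MeasureTheory Filter Topology Set

noncomputable section

/-- Phase space `ℝ × ℝ^{d+1} × ℝ × ℝ^{d+1}`, points `ϱ = (t, x, τ, ξ)`. -/
abbrev Phase (d : ℕ) : Type := ℝ × (Fin (d + 1) → ℝ) × ℝ × (Fin (d + 1) → ℝ)

/-- Boundary phase space `ℝ × ℝ^d × ℝ × ℝ^d`, points `ϱ' = (t, x', τ, ξ')`. -/
abbrev BPhase (d : ℕ) : Type := ℝ × (Fin d → ℝ) × ℝ × (Fin d → ℝ)

variable {d : ℕ}

/-- The quadratic form `⟨A ξ, ξ⟩`. -/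
def qf (A : Fin (d + 1) → Fin (d + 1) → ℝ) (ξ : Fin (d + 1) → ℝ) : ℝ :=
  ∑ i, ∑ j, A i j * ξ i * ξ j

variable (a : (Fin (d + 1) → ℝ) → Fin (d + 1) → Fin (d + 1) → ℝ)

/-- The principal symbol `p(ϱ) = -τ² + ⟨a(x)ξ, ξ⟩`. -/
def psymb (ϱ : Phase d) : ℝ := -ϱ.2.2.1 ^ 2 + qf (a ϱ.2.1) ϱ.2.2.2

/-- The Hamiltonian vector field of `p`. -/
def Hp (ϱ : Phase d) : Phase d :=
  (-(2 * ϱ.2.2.1),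
    fun i => 2 * ∑ j, a ϱ.2.1 i j * ϱ.2.2.2 j,
    0,
    fun k => -(fderiv ℝ (fun y => qf (a y) ϱ.2.2.2) ϱ.2.1 (Pi.single k 1)))

/-- `H_p z (ϱ) = 2 (a(x) ξ)_d`. -/
def Hpz (ϱ : Phase d) : ℝ := 2 * ∑ j, a ϱ.2.1 (Fin.last d) j * ϱ.2.2.2 j

/-- `H_p² z (ϱ) = d(H_p z)(ϱ)[H_p(ϱ)]`. -/
def Hp2z (ϱ : Phase d) : ℝ := fderiv ℝ (Hpz a) ϱ (Hp a ϱ)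

/-- The `z`-component (last coordinate of `x`). -/
def zc (ϱ : Phase d) : ℝ := ϱ.2.1 (Fin.last d)

/-- The characteristic set `{p = 0}`. -/
def CharSet : Set (Phase d) := {ϱ | psymb a ϱ = 0}

/-- Hyperbolic set `H_∂⁺`. -/
def Hplus : Set (Phase d) := {ϱ | zc ϱ = 0 ∧ psymb a ϱ = 0 ∧ 0 < Hpz a ϱ}

/-- Hyperbolic set `H_∂⁻`. -/
def Hminus : Set (Phase d) := {ϱ | zc ϱ = 0 ∧ psymb a ϱ = 0 ∧ Hpz a ϱ < 0}

/-- Glancing set `G_∂`. -/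
def Gb : Set (Phase d) := {ϱ | zc ϱ = 0 ∧ psymb a ϱ = 0 ∧ Hpz a ϱ = 0}

/-- Diffractive set `G_∂^sd`. -/
def Gsd : Set (Phase d) := {ϱ | ϱ ∈ Gb a ∧ 0 < Hp2z a ϱ}

/-- Order-three glancing set `G_∂^gl`. -/
def Ggl : Set (Phase d) := {ϱ | ϱ ∈ Gb a ∧ Hp2z a ϱ = 0}

/-- Gliding set `G_∂^sg`. -/
def Gsg : Set (Phase d) := {ϱ | ϱ ∈ Gb a ∧ Hp2z a ϱ < 0}

/-- `a` is a C¹ symmetric positive definite (inverse) metric on `U`. -/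
def MetricHyp (U : Set (Fin (d + 1) → ℝ)) : Prop :=
  ContDiffOn ℝ 1 a U ∧ (∀ x ∈ U, ∀ i j, a x i j = a x j i) ∧
    ∀ x ∈ U, ∀ ξ : Fin (d + 1) → ℝ, ξ ≠ 0 → 0 < qf (a x) ξ

/-- Quasi-normal coordinates at the boundary. -/
def QuasiNormal (U : Set (Fin (d + 1) → ℝ)) : Prop :=
  ∀ x ∈ U, x (Fin.last d) = 0 →
    (∀ j, j ≠ Fin.last d → a x (Fin.last d) j = 0) ∧ a x (Fin.last d) (Fin.last d) = 1

/-- The reflection `Σ`, flipping the sign of the `ζ`-component. -/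
def reflζ (ϱ : Phase d) : Phase d :=
  (ϱ.1, ϱ.2.1, ϱ.2.2.1, Function.update ϱ.2.2.2 (Fin.last d) (-ϱ.2.2.2 (Fin.last d)))

/-- The coordinate unit vector in the `ζ`-direction. -/
def eζ (d : ℕ) : Phase d := (0, 0, 0, Pi.single (Fin.last d) 1)

/-- The tangential projection `π_∥`. -/
def tproj (ϱ : Phase d) : Phase d :=
  (ϱ.1, ϱ.2.1, ϱ.2.2.1,
    Function.update ϱ.2.2.2 (Fin.last d)
      (ϱ.2.2.2 (Fin.last d) - Hpz a ϱ / (2 * a ϱ.2.1 (Fin.last d) (Fin.last d))))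

/-- The gliding vector field `H_p^G`. -/
def HpG (ϱ : Phase d) : Phase d :=
  Hp a ϱ - (Hp2z a ϱ / (2 * a ϱ.2.1 (Fin.last d) (Fin.last d))) • eζ d

/-- Extension of a boundary space point by `z = 0`. -/
def ext0 (x' : Fin d → ℝ) : Fin (d + 1) → ℝ := Fin.snoc x' 0

/-- Lift of a boundary phase point with prescribed `ζ`-component. -/
def liftB (ϱ' : BPhase d) (ζ : ℝ) : Phase d :=
  (ϱ'.1, ext0 ϱ'.2.1, ϱ'.2.2.1, Fin.snoc ϱ'.2.2.2 ζ)

/-- `r(ϱ') = τ² - ⟨a'(x')ξ', ξ'⟩`. -/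
def rb (ϱ' : BPhase d) : ℝ :=
  ϱ'.2.2.1 ^ 2 - ∑ i : Fin d, ∑ j : Fin d,
    a (ext0 ϱ'.2.1) (Fin.castSucc i) (Fin.castSucc j) * ϱ'.2.2.2 i * ϱ'.2.2.2 j

/-- The boundary integrand `Φq`. -/
def PhiFn (q : Phase d → ℝ) (ϱ' : BPhase d) : ℝ :=
  if 0 < rb a ϱ' then
    (q (liftB ϱ' (Real.sqrt (rb a ϱ'))) - q (liftB ϱ' (-Real.sqrt (rb a ϱ')))) /
      (2 * Real.sqrt (rb a ϱ'))
  else fderiv ℝ q (liftB ϱ' 0) (eζ d)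

/-- The support of a measure: points all of whose open neighbourhoods have positive measure. -/
def msupp {α : Type*} [TopologicalSpace α] [MeasurableSpace α]
    (μ : Measure α) : Set α :=
  {x | ∀ O : Set α, IsOpen O → x ∈ O → 0 < μ O}

/-- The boundary transport equation `ᵗH_p μ = f μ - ∫ (δ_{ϱ'⁺} - δ_{ϱ'⁻})/⟨ξ⁺-ξ⁻, n⟩ dν`. -/
def BTE (𝒰 : Set (Phase d)) (μ : Measure (Phase d)) (ν : Measure (BPhase d))
    (f : Phase d → ℝ) : Prop :=
  ∀ q : Phase d → ℝ, ContDiff ℝ 1 q → HasCompactSupport q → tsupport q ⊆ 𝒰 →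
    ∫ ϱ, fderiv ℝ q ϱ (Hp a ϱ) ∂μ =
      ∫ ϱ, f ϱ * q ϱ ∂μ - ∫ ϱ' in {ϱ' | 0 ≤ rb a ϱ'}, PhiFn a q ϱ' ∂ν

/-- Standing support assumptions:
`supp μ ⊆ Char p ∩ {z ≥ 0}` and `supp μ ∩ {(τ, ξ) = 0} = ∅`. -/
def StandingSupp (μ : Measure (Phase d)) : Prop :=
  msupp μ ⊆ CharSet a ∩ {ϱ | 0 ≤ zc ϱ} ∧
    ∀ ϱ ∈ msupp μ, ¬(ϱ.2.2.1 = 0 ∧ ϱ.2.2.2 = 0)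

/-- `μ` is a nonnegative Radon measure on the open set `𝒰`. -/
def RadonOn (𝒰 : Set (Phase d)) (μ : Measure (Phase d)) : Prop :=
  μ 𝒰ᶜ = 0 ∧ ∀ K : Set (Phase d), IsCompact K → K ⊆ 𝒰 → μ K < ⊤

/-- `ν` is a nonnegative Radon measure on the boundary phase space over `U`. -/
def BRadon (U : Set (Fin (d + 1) → ℝ)) (ν : Measure (BPhase d)) : Prop :=
  ν {ϱ' | ext0 ϱ'.2.1 ∉ U} = 0 ∧
    ∀ K : Set (BPhase d), IsCompact K → (∀ ϱ' ∈ K, ext0 ϱ'.2.1 ∈ U) → ν K < ⊤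

/-- A bicharacteristic valued in `V`, defined on the interval `J`. -/
def BicharOn (V : Set (Phase d)) (γ : ℝ → Phase d) (J : Set ℝ) : Prop :=
  J.OrdConnected ∧
    ∀ s ∈ J, γ s ∈ V ∧ psymb a (γ s) = 0 ∧ HasDerivWithinAt γ (Hp a (γ s)) J s

/-- A maximal bicharacteristic in `V`: it cannot be extended by a bicharacteristic in `V`. -/
def MaxBicharOn (V : Set (Phase d)) (γ : ℝ → Phase d) (J : Set ℝ) : Prop :=
  BicharOn a V γ J ∧
    ∀ (γ' : ℝ → Phase d) (J' : Set ℝ), BicharOn a V γ' J' → J ⊆ J' →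
      (∀ s ∈ J, γ' s = γ s) → J' = J

/-- A generalized bicharacteristic on `J ∖ B`. -/
structure IsGenBichar (J B : Set ℝ) (γ : ℝ → Phase d) : Prop where
  ordConn : J.OrdConnected
  subJ : B ⊆ J
  discr : ∀ S ∈ B, ∃ ε > 0, ∀ s ∈ B, |s - S| < ε → s = S
  memChar : ∀ s ∈ J \ B,
    psymb a (γ s) = 0 ∧ 0 ≤ zc (γ s) ∧ γ s ∉ Hplus a ∪ Hminus a
  derivHp : ∀ s ∈ J \ B, γ s ∉ Gsg a → HasDerivWithinAt γ (Hp a (γ s)) (J \ B) s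
  derivHpG : ∀ s ∈ J \ B, γ s ∈ Gsg a → HasDerivWithinAt γ (HpG a (γ s)) (J \ B) s
  posNear : ∀ S ∈ B, ∃ ε > 0, ∀ s ∈ (J \ B) ∩ Ioo (S - ε) (S + ε), 0 < zc (γ s)
  leftLim : ∀ S ∈ B, (∃ ε > 0, Icc (S - ε) S ⊆ J) →
    ∃ ϱm ∈ Hminus a, Tendsto γ (𝓝[(J \ B) ∩ Iio S] S) (𝓝 ϱm)
  rightLim : ∀ S ∈ B, (∃ ε > 0, Icc S (S + ε) ⊆ J) →
    ∃ ϱp ∈ Hplus a, Tendsto γ (𝓝[(J \ B) ∩ Ioi S] S) (𝓝 ϱp)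
  reflect : ∀ S ∈ B, (∃ ε > 0, Icc (S - ε) (S + ε) ⊆ J) →
    ∀ ϱm ϱp : Phase d,
      Tendsto γ (𝓝[(J \ B) ∩ Iio S] S) (𝓝 ϱm) →
      Tendsto γ (𝓝[(J \ B) ∩ Ioi S] S) (𝓝 ϱp) → ϱp = reflζ ϱm

/-- A broken bicharacteristic on `J ∖ B`. -/
structure IsBrokenBichar (J B : Set ℝ) (γ : ℝ → Phase d) : Prop where
  ordConn : J.OrdConnected
  subJ : B ⊆ J
  discr : ∀ S ∈ B, ∃ ε > 0, ∀ s ∈ B, |s - S| < ε → s = S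
  memChar : ∀ s ∈ J \ B,
    psymb a (γ s) = 0 ∧ 0 ≤ zc (γ s) ∧
      γ s ∉ Hplus a ∪ Hminus a ∪ Ggl a ∪ Gsg a
  derivHp : ∀ s ∈ J \ B, HasDerivWithinAt γ (Hp a (γ s)) (J \ B) s
  posNear : ∀ S ∈ B, ∃ ε > 0, ∀ s ∈ (J \ B) ∩ Ioo (S - ε) (S + ε), 0 < zc (γ s)
  leftLim : ∀ S ∈ B, (∃ ε > 0, Icc (S - ε) S ⊆ J) →
    ∃ ϱm ∈ Hminus a, Tendsto γ (𝓝[(J \ B) ∩ Iio S] S) (𝓝 ϱm)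
  rightLim : ∀ S ∈ B, (∃ ε > 0, Icc S (S + ε) ⊆ J) →
    ∃ ϱp ∈ Hplus a, Tendsto γ (𝓝[(J \ B) ∩ Ioi S] S) (𝓝 ϱp)
  reflect : ∀ S ∈ B, (∃ ε > 0, Icc (S - ε) (S + ε) ⊆ J) →
    ∀ ϱm ϱp : Phase d,
      Tendsto γ (𝓝[(J \ B) ∩ Iio S] S) (𝓝 ϱm) →
      Tendsto γ (𝓝[(J \ B) ∩ Ioi S] S) (𝓝 ϱp) → ϱp = reflζ ϱm

/-- The closure `γ̄` of a generalized bicharacteristic: its image together with its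
one-sided limits at reflection points. -/
def genClosure (J B : Set ℝ) (γ : ℝ → Phase d) : Set (Phase d) :=
  γ '' (J \ B) ∪
    {ϱ | ∃ S ∈ B,
      ((𝓝[(J \ B) ∩ Iio S] S).NeBot ∧ Tendsto γ (𝓝[(J \ B) ∩ Iio S] S) (𝓝 ϱ)) ∨
      ((𝓝[(J \ B) ∩ Ioi S] S).NeBot ∧ Tendsto γ (𝓝[(J \ B) ∩ Ioi S] S) (𝓝 ϱ))}

/-- A generalized bicharacteristic valued in `𝒰`. -/
def GenBicharIn (𝒰 : Set (Phase d)) (J B : Set ℝ) (γ : ℝ → Phase d) : Prop :=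
  IsGenBichar a J B γ ∧ ∀ s ∈ J \ B, γ s ∈ 𝒰

/-- A maximal generalized bicharacteristic in `𝒰`. -/
def MaxGenBicharIn (𝒰 : Set (Phase d)) (J B : Set ℝ) (γ : ℝ → Phase d) : Prop :=
  GenBicharIn a 𝒰 J B γ ∧
    ∀ (J' B' : Set ℝ) (γ' : ℝ → Phase d), GenBicharIn a 𝒰 J' B' γ' →
      J ⊆ J' → B' ∩ J = B → (∀ s ∈ J \ B, γ' s = γ s) → J' = J

/-!
Near a point of `H_∂⁺` the field `H_p` is bounded by some `M` and `H_p z > 0` on a closed ball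
of radius `R`. A bicharacteristic starting within `R / 2` of the centre and living for a time
shorter than `R / (2 (M + 1))` cannot leave that ball; so it is Lipschitz, has a limit `L` at its
final time, and `z` increases along it, whence `z(L) > 0`. The curve then extends through `L`
inside `Ω₊`, against maximality. The case of `H_∂⁻` is the time reversal of this one, since
`(t, x, τ, ξ) ↦ (t, x, -τ, -ξ)` preserves `p` and reverses `H_p`.
-/

open Metric
open scoped Pointwise

theorem contDiff_qf {n : WithTop ℕ∞} :
    ContDiff ℝ n fun p : (Fin (d + 1) → Fin (d + 1) → ℝ) × (Fin (d + 1) → ℝ) => qf p.1 p.2 := by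
  unfold qf
  fun_prop

theorem continuousAt_psymb {ϱ : Phase d} (ha : ContinuousAt a ϱ.2.1) :
    ContinuousAt (psymb a) ϱ := by
  have hqf : ContinuousAt (fun ϱ : Phase d => qf (a ϱ.2.1) ϱ.2.2.2) ϱ :=
    (contDiff_qf (n := 0)).continuous.continuousAt.comp
      (f := fun ϱ : Phase d => (a ϱ.2.1, ϱ.2.2.2)) (by fun_prop)
  unfold psymb
  fun_prop

theorem continuousAt_Hp {ϱ : Phase d} (ha : ContDiffAt ℝ 1 a ϱ.2.1) :
    ContinuousAt (Hp a) ϱ := by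
  have hgrad : ContinuousAt (fun ϱ : Phase d => fderiv ℝ (fun y => qf (a y) ϱ.2.2.2) ϱ.2.1) ϱ := by
    refine (ContDiffAt.fderiv (n := 1) (m := 0) ?_ (by fun_prop) (by simp)).continuousAt
    exact contDiff_qf.contDiffAt.comp (f := fun p : Phase d × _ => (a p.2, p.1.2.2.2)) _
      ((ha.comp (ϱ, ϱ.2.1) contDiffAt_snd).prodMk (by fun_prop))
  have hmul : ContinuousAt (fun ϱ : Phase d => fun i => 2 * ∑ j, a ϱ.2.1 i j * ϱ.2.2.2 j) ϱ :=
    (by fun_prop : Continuous fun p : (Fin (d + 1) → Fin (d + 1) → ℝ) × (Fin (d + 1) → ℝ) =>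
      fun i => 2 * ∑ j, p.1 i j * p.2 j).continuousAt.comp
      (f := fun ϱ : Phase d => (a ϱ.2.1, ϱ.2.2.2)) (by have := ha.continuousAt; fun_prop)
  exact ContinuousAt.prodMk (by fun_prop) (ContinuousAt.prodMk hmul
    (ContinuousAt.prodMk continuousAt_const
      (continuousAt_pi.2 fun k => (hgrad.clm_apply continuousAt_const).neg)))

theorem continuousAt_Hpz {ϱ : Phase d} (ha : ContDiffAt ℝ 1 a ϱ.2.1) :
    ContinuousAt (Hpz a) ϱ :=
  (continuous_apply (Fin.last d)).continuousAt.comp (continuousAt_Hp a ha).snd.fst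

section CurveEstimates

variable {E : Type*} [NormedAddCommGroup E] [NormedSpace ℝ E]

theorem mapsTo_ball_of_tendsto_nhdsGT {F : E → E} {γ : ℝ → E} {s₁ s₂ M R : ℝ} {x₀ y : E}
    (hγ : ∀ s ∈ Ioo s₁ s₂, HasDerivAt γ (F (γ s)) s) (hM : 0 ≤ M)
    (hF : ∀ x ∈ closedBall x₀ R, ‖F x‖ < M) (hlim : Tendsto γ (𝓝[>] s₁) (𝓝 y))
    (hy : dist y x₀ + M * (s₂ - s₁) < R) :
    MapsTo γ (Ioo s₁ s₂) (ball x₀ R) := by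
  intro s hs
  have hclose : ∀ᶠ t in 𝓝[>] s₁, dist (γ t) x₀ < R - M * (s₂ - s₁) :=
    (hlim.dist tendsto_const_nhds).eventually_lt_const (by linarith)
  obtain ⟨t, ht, hts⟩ := (hclose.and (Ioo_mem_nhdsGT hs.1)).exists
  have hsub : Icc t s ⊆ Ioo s₁ s₂ := Icc_subset_Ioo hts.1 hs.2
  have hbound := image_norm_le_of_norm_deriv_right_lt_deriv_boundary
    (f := fun u => γ u - x₀) (f' := fun u => F (γ u)) (a := t) (b := s)
    (B := fun u => dist (γ t) x₀ + M * (u - t)) (B' := fun _ => M)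
    (fun u hu => ((hγ u (hsub hu)).continuousAt.sub continuousAt_const).continuousWithinAt)
    (fun u hu => ((hγ u (hsub (Ico_subset_Icc_self hu))).sub_const x₀).hasDerivWithinAt)
    (by simp [dist_eq_norm])
    (fun u => by
      simpa using ((hasDerivAt_id u).sub_const t).const_mul M |>.const_add (dist (γ t) x₀))
    (fun u hu hu_eq => hF _ <| by
      rw [mem_closedBall, dist_eq_norm, hu_eq]
      nlinarith [hu.1, hu.2, hs.2, hts.1])
    ⟨hts.2.le, le_rfl⟩
  rw [mem_ball, dist_eq_norm]
  nlinarith [hts.2, hs.2, hts.1]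

theorem exists_tendsto_nhdsLT_of_norm_deriv_le [CompleteSpace E] {γ γ' : ℝ → E} {s₁ s₂ M : ℝ}
    (hs : s₁ < s₂) (hγ : ∀ s ∈ Ioo s₁ s₂, HasDerivAt γ (γ' s) s)
    (hM : ∀ s ∈ Ioo s₁ s₂, ‖γ' s‖ ≤ M) :
    ∃ L, Tendsto γ (𝓝[<] s₂) (𝓝 L) := by
  have hlip : LipschitzOnWith M.toNNReal γ (Ioo s₁ s₂) :=
    (convex_Ioo s₁ s₂).lipschitzOnWith_of_nnnorm_hasDerivWithin_le
      (fun s hs => (hγ s hs).hasDerivWithinAt)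
      fun s hs => NNReal.le_toNNReal_of_coe_le ((coe_nnnorm _).trans_le (hM s hs))
  have hcauchy : Cauchy (map γ (𝓝[<] s₂)) :=
    (cauchy_nhds.mono nhdsWithin_le_nhds).map_of_le hlip.uniformContinuousOn
      (le_principal_iff.2 (Ioo_mem_nhdsLT hs))
  exact CompleteSpace.complete hcauchy

end CurveEstimates

section Bicharacteristics

variable {V : Set (Phase d)} {γ : ℝ → Phase d}

theorem BicharOn.hasDerivAt {J : Set ℝ} (hγ : BicharOn a V γ J) {s : ℝ} (hs : J ∈ 𝓝 s) :
    HasDerivAt γ (Hp a (γ s)) s :=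
  ((hγ.2 s (mem_of_mem_nhds hs)).2.2).hasDerivAt hs

theorem BicharOn.extend_right {s₁ s₂ : ℝ} {L : Phase d} (hγ : BicharOn a V γ (Ioo s₁ s₂))
    (hs : s₁ < s₂) (hlim : Tendsto γ (𝓝[<] s₂) (𝓝 L)) (hLV : L ∈ V)
    (hpL : ContinuousAt (psymb a) L) (hHpL : ContinuousAt (Hp a) L) :
    BicharOn a V (Function.update γ s₂ L) (Ioc s₁ s₂) := by
  set γ' := Function.update γ s₂ L
  have hγ's₂ : γ' s₂ = L := Function.update_self _ _ _
  have heq : EqOn γ' γ (Ioo s₁ s₂) := fun s hs => Function.update_of_ne hs.2.ne _ _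
  have hderiv : ∀ s ∈ Ioo s₁ s₂, HasDerivAt γ' (Hp a (γ s)) s := fun s hs =>
    (hγ.hasDerivAt a (isOpen_Ioo.mem_nhds hs)).congr_of_eventuallyEq
      (eventuallyEq_of_mem (isOpen_Ioo.mem_nhds hs) heq)
  have hIoo : Ioo s₁ s₂ ∈ 𝓝[<] s₂ := Ioo_mem_nhdsLT hs
  have hlim' : Tendsto γ' (𝓝[<] s₂) (𝓝 L) :=
    hlim.congr' (eventuallyEq_of_mem hIoo heq.symm)
  have hpL0 : psymb a L = 0 :=
    tendsto_nhds_unique (hpL.tendsto.comp hlim)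
      (tendsto_const_nhds.congr' (eventuallyEq_of_mem hIoo fun s hs => ((hγ.2 s hs).2.1).symm))
  have hend : HasDerivWithinAt γ' (Hp a L) (Iic s₂) s₂ := by
    refine hasDerivWithinAt_Iic_of_tendsto_deriv (s := Ioo s₁ s₂)
      (fun s hs => (hderiv s hs).differentiableAt.differentiableWithinAt) ?_ hIoo ?_
    · rwa [ContinuousWithinAt, hγ's₂, nhdsWithin_Ioo_eq_nhdsLT hs]
    · exact (hHpL.tendsto.comp hlim).congr'
        (eventuallyEq_of_mem hIoo fun s hs => (hderiv s hs).deriv.symm)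
  refine ⟨ordConnected_Ioc, fun s hs => ?_⟩
  rcases hs.2.lt_or_eq with hlt | rfl
  · have hs' : s ∈ Ioo s₁ s₂ := ⟨hs.1, hlt⟩
    rw [heq hs']
    exact ⟨(hγ.2 s hs').1, (hγ.2 s hs').2.1, (hderiv s hs').hasDerivWithinAt⟩
  · rw [hγ's₂]
    exact ⟨hLV, hpL0, hend.mono Ioc_subset_Iic_self⟩

theorem MaxBicharOn.not_tendsto_nhdsLT {s₁ s₂ : ℝ} {L : Phase d}
    (hγ : MaxBicharOn a V γ (Ioo s₁ s₂)) (hs : s₁ < s₂) (hLV : L ∈ V)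
    (hpL : ContinuousAt (psymb a) L) (hHpL : ContinuousAt (Hp a) L) :
    ¬ Tendsto γ (𝓝[<] s₂) (𝓝 L) := fun hlim => by
  have := hγ.2 _ _ (hγ.1.extend_right a hs hlim hLV hpL hHpL) Ioo_subset_Ioc_self
    fun s hs => Function.update_of_ne hs.2.ne _ _
  exact (this ▸ right_mem_Ioc.2 hs).2.ne rfl

end Bicharacteristics

section Reversal

def momentumNeg : Phase d →L[ℝ] Phase d :=
  (ContinuousLinearMap.id ℝ ℝ).prodMap
    ((ContinuousLinearMap.id ℝ _).prodMap (-ContinuousLinearMap.id ℝ _))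

theorem momentumNeg_apply (ϱ : Phase d) : momentumNeg ϱ = (ϱ.1, ϱ.2.1, -ϱ.2.2) := rfl

@[simp]
theorem momentumNeg_momentumNeg (ϱ : Phase d) : momentumNeg (momentumNeg ϱ) = ϱ := by
  simp [momentumNeg_apply]

theorem qf_neg (A : Fin (d + 1) → Fin (d + 1) → ℝ) (ξ : Fin (d + 1) → ℝ) : qf A (-ξ) = qf A ξ := by
  simp [qf]

@[simp]
theorem psymb_momentumNeg (ϱ : Phase d) : psymb a (momentumNeg ϱ) = psymb a ϱ := by
  simp [momentumNeg_apply, psymb, qf_neg]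

@[simp]
theorem Hpz_momentumNeg (ϱ : Phase d) : Hpz a (momentumNeg ϱ) = -Hpz a ϱ := by
  simp [momentumNeg_apply, Hpz, Finset.sum_neg_distrib]

theorem Hp_momentumNeg (ϱ : Phase d) : Hp a (momentumNeg ϱ) = -momentumNeg (Hp a ϱ) := by
  have hqf : (fun y => qf (a y) (-ϱ.2.2.2)) = fun y => qf (a y) ϱ.2.2.2 :=
    funext fun y => qf_neg _ _
  simp only [momentumNeg_apply, Hp, Prod.snd_neg, Prod.fst_neg, hqf, Prod.neg_mk, neg_neg, neg_zero]
  refine Prod.ext (by ring) (Prod.ext (funext fun i => ?_) rfl)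
  simp [Finset.sum_neg_distrib]

variable {V : Set (Phase d)} {γ : ℝ → Phase d} {J : Set ℝ}

theorem BicharOn.reverse (hV : MapsTo momentumNeg V V) (hγ : BicharOn a V γ J) :
    BicharOn a V (fun s => momentumNeg (γ (-s))) (-J) := by
  refine ⟨⟨fun x hx y hy z hz => ?_⟩, fun s hs => ?_⟩
  · exact hγ.1.out hy hx ⟨neg_le_neg hz.2, neg_le_neg hz.1⟩
  obtain ⟨hV', hp, hd⟩ := hγ.2 (-s) hs
  refine ⟨hV hV', by simpa using hp, ?_⟩
  have := momentumNeg.hasFDerivAt.comp_hasDerivWithinAt s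
    (hd.scomp s (hasDerivWithinAt_neg s (-J)) fun u hu => hu)
  rwa [neg_one_smul, map_neg, ← Hp_momentumNeg] at this

theorem MaxBicharOn.reverse (hV : MapsTo momentumNeg V V) (hγ : MaxBicharOn a V γ J) :
    MaxBicharOn a V (fun s => momentumNeg (γ (-s))) (-J) := by
  refine ⟨hγ.1.reverse a hV, fun γ' J' hγ' hJ heq => ?_⟩
  have := hγ.2 _ _ (hγ'.reverse a hV) (by simpa using Set.neg_subset_neg.2 hJ)
    fun s hs => by simp [heq (-s) (by simpa using hs)]
  rw [← this, neg_neg]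

end Reversal

def omegaPlus (U : Set (Fin (d + 1) → ℝ)) : Set (Phase d) := {ϱ | ϱ.2.1 ∈ U ∧ 0 < zc ϱ}

theorem mapsTo_momentumNeg_omegaPlus (U : Set (Fin (d + 1) → ℝ)) :
    MapsTo momentumNeg (omegaPlus U) (omegaPlus U) := fun _ h => h

theorem hasDerivAt_zc_comp {γ : ℝ → Phase d} {s : ℝ} (h : HasDerivAt γ (Hp a (γ s)) s) :
    HasDerivAt (fun s => zc (γ s)) (Hpz a (γ s)) s :=
  ((ContinuousLinearMap.proj (Fin.last d) : (Fin (d + 1) → ℝ) →L[ℝ] ℝ) ∘L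
    ContinuousLinearMap.fst ℝ (Fin (d + 1) → ℝ) (ℝ × (Fin (d + 1) → ℝ)) ∘L
    ContinuousLinearMap.snd ℝ ℝ ((Fin (d + 1) → ℝ) × ℝ × (Fin (d + 1) → ℝ))).hasFDerivAt
    |>.comp_hasDerivAt s h

theorem zc_pos_of_tendsto_nhdsLT {γ : ℝ → Phase d} {s₁ s₂ : ℝ} {L : Phase d} (hs : s₁ < s₂)
    (hγ : ∀ s ∈ Ioo s₁ s₂, HasDerivAt γ (Hp a (γ s)) s)
    (hHpz : ∀ s ∈ Ioo s₁ s₂, 0 ≤ Hpz a (γ s)) (hz : ∀ s ∈ Ioo s₁ s₂, 0 < zc (γ s))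
    (hlim : Tendsto γ (𝓝[<] s₂) (𝓝 L)) : 0 < zc L := by
  have hmono : MonotoneOn (fun s => zc (γ s)) (Ioo s₁ s₂) := by
    refine monotoneOn_of_hasDerivWithinAt_nonneg (f' := fun s => Hpz a (γ s)) (convex_Ioo s₁ s₂)
      (fun s hs => (hasDerivAt_zc_comp a (hγ s hs)).continuousAt.continuousWithinAt) ?_ ?_ <;>
    rw [interior_Ioo]
    exacts [fun s hs => (hasDerivAt_zc_comp a (hγ s hs)).hasDerivWithinAt, hHpz]
  have hs₀ : (s₁ + s₂) / 2 ∈ Ioo s₁ s₂ := ⟨by linarith, by linarith⟩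
  have hle : zc (γ ((s₁ + s₂) / 2)) ≤ zc L := by
    have hzc : Continuous (zc (d := d)) := by unfold zc; fun_prop
    refine ge_of_tendsto ((hzc.tendsto L).comp hlim) ?_
    filter_upwards [Ioo_mem_nhdsLT hs₀.2] with s hs
    exact hmono hs₀ ⟨hs₀.1.trans hs.1, hs.2⟩ hs.1.le
  exact (hz _ hs₀).trans_le hle

section LengthBound

variable {U : Set (Fin (d + 1) → ℝ)}

theorem exists_le_length_of_tendsto_nhdsGT (hU : IsOpen U) (ha : ContDiffOn ℝ 1 a U)
    {ϱ0 : Phase d} (hx : ϱ0.2.1 ∈ U) (hpos : 0 < Hpz a ϱ0) :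
    ∃ S₀ > 0, ∃ W : Set (Phase d), IsOpen W ∧ ϱ0 ∈ W ∧ W ⊆ {ϱ | 0 < Hpz a ϱ} ∧
      ∀ (γ : ℝ → Phase d) (s₁ s₂ : ℝ) (ϱ : Phase d), s₁ < s₂ →
        MaxBicharOn a (omegaPlus U) γ (Ioo s₁ s₂) → Tendsto γ (𝓝[>] s₁) (𝓝 ϱ) → ϱ ∈ W →
          S₀ ≤ s₂ - s₁ := by
  have ha' : ∀ ϱ : Phase d, ϱ.2.1 ∈ U → ContDiffAt ℝ 1 a ϱ.2.1 := fun ϱ hϱ =>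
    ha.contDiffAt (hU.mem_nhds hϱ)
  have hnhds : {ϱ : Phase d | ϱ.2.1 ∈ U ∧ 0 < Hpz a ϱ} ∈ 𝓝 ϱ0 :=
    inter_mem ((hU.preimage (by fun_prop)).mem_nhds hx)
      ((continuousAt_Hpz a (ha' ϱ0 hx)).eventually (lt_mem_nhds hpos))
  obtain ⟨R, hR, hK⟩ := nhds_basis_closedBall.mem_iff.1 hnhds
  obtain ⟨M, hM⟩ := (isCompact_closedBall ϱ0 R).exists_bound_of_continuousOn fun ϱ hϱ =>
    (continuousAt_Hp a (ha' ϱ (hK hϱ).1)).continuousWithinAt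
  have hM0 : 0 ≤ M := (norm_nonneg _).trans (hM ϱ0 (mem_closedBall_self hR.le))
  refine ⟨R / 2 / (M + 1), by positivity, ball ϱ0 (R / 2), isOpen_ball,
    mem_ball_self (by positivity),
    fun ϱ hϱ => (hK (closedBall_subset_closedBall (by linarith) (ball_subset_closedBall hϱ))).2,
    fun γ s₁ s₂ ϱ hs hγ hlim hϱ => ?_⟩
  by_contra! hshort
  have hderiv : ∀ s ∈ Ioo s₁ s₂, HasDerivAt γ (Hp a (γ s)) s := fun s hs =>
    hγ.1.hasDerivAt a (isOpen_Ioo.mem_nhds hs)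
  have hconf : MapsTo γ (Ioo s₁ s₂) (closedBall ϱ0 R) := by
    refine (mapsTo_ball_of_tendsto_nhdsGT hderiv (by linarith)
      (fun x hx => (hM x hx).trans_lt (lt_add_one M)) hlim ?_).mono_right ball_subset_closedBall
    rw [lt_div_iff₀ (by linarith)] at hshort
    linarith [mem_ball.1 hϱ]
  obtain ⟨L, hL⟩ := exists_tendsto_nhdsLT_of_norm_deriv_le hs hderiv fun s hs => hM _ (hconf hs)
  have hLK : L ∈ closedBall ϱ0 R :=
    isClosed_closedBall.mem_of_tendsto hL (eventually_of_mem (Ioo_mem_nhdsLT hs) hconf)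
  have hzL : 0 < zc L := zc_pos_of_tendsto_nhdsLT a hs hderiv
    (fun s hs => (hK (hconf hs)).2.le) (fun s hs => (hγ.1.2 s hs).1.2) hL
  exact hγ.not_tendsto_nhdsLT a hs ⟨(hK hLK).1, hzL⟩
    (continuousAt_psymb a (ha' L (hK hLK).1).continuousAt) (continuousAt_Hp a (ha' L (hK hLK).1)) hL

theorem exists_le_length_of_tendsto_nhdsLT (hU : IsOpen U) (ha : ContDiffOn ℝ 1 a U)
    {ϱ0 : Phase d} (hx : ϱ0.2.1 ∈ U) (hneg : Hpz a ϱ0 < 0) :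
    ∃ S₀ > 0, ∃ W : Set (Phase d), IsOpen W ∧ ϱ0 ∈ W ∧ W ⊆ {ϱ | Hpz a ϱ < 0} ∧
      ∀ (γ : ℝ → Phase d) (s₁ s₂ : ℝ) (ϱ : Phase d), s₁ < s₂ →
        MaxBicharOn a (omegaPlus U) γ (Ioo s₁ s₂) → Tendsto γ (𝓝[<] s₂) (𝓝 ϱ) → ϱ ∈ W →
          S₀ ≤ s₂ - s₁ := by
  obtain ⟨S₀, hS₀, W, hW, hϱ0W, hWpos, hlen⟩ :=
    exists_le_length_of_tendsto_nhdsGT a hU ha (ϱ0 := momentumNeg ϱ0) hx (by simpa using hneg)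
  refine ⟨S₀, hS₀, momentumNeg ⁻¹' W, hW.preimage momentumNeg.continuous, hϱ0W,
    fun ϱ hϱ => by simpa using hWpos hϱ, fun γ s₁ s₂ ϱ hs hγ hlim hϱ => ?_⟩
  have hrev := hγ.reverse a (mapsTo_momentumNeg_omegaPlus U)
  rw [neg_Ioo] at hrev
  have := hlen _ (-s₂) (-s₁) (momentumNeg ϱ) (neg_lt_neg hs) hrev
    ((momentumNeg.continuous.tendsto ϱ).comp (hlim.comp tendsto_neg_nhdsGT_neg)) hϱ
  linarith

end LengthBound

theorem stmt7 (U : Set (Fin (d + 1) → ℝ)) (hU : IsOpen U) (hmet : MetricHyp a U)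
    (ϱ0 : Phase d) (hx : ϱ0.2.1 ∈ U) (hH : ϱ0 ∈ Hminus a ∪ Hplus a) :
    ∃ S₀ > 0, ∃ W : Set (Phase d), IsOpen W ∧ ϱ0 ∈ W ∧
      (ϱ0 ∈ Hminus a → W ∩ CharSet a ∩ {ϱ | zc ϱ = 0} ⊆ Hminus a) ∧
      (ϱ0 ∈ Hplus a → W ∩ CharSet a ∩ {ϱ | zc ϱ = 0} ⊆ Hplus a) ∧
      ∀ (γ : ℝ → Phase d) (s₁ s₂ : ℝ), s₁ < s₂ →
        MaxBicharOn a {ϱ | ϱ.2.1 ∈ U ∧ 0 < zc ϱ} γ (Set.Ioo s₁ s₂) →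
        (ϱ0 ∈ Hminus a → ∀ ϱ : Phase d,
          Tendsto γ (𝓝[Set.Ioo s₁ s₂] s₂) (𝓝 ϱ) → ϱ ∈ W ∩ Hminus a → S₀ ≤ s₂ - s₁) ∧
        (ϱ0 ∈ Hplus a → ∀ ϱ : Phase d,
          Tendsto γ (𝓝[Set.Ioo s₁ s₂] s₁) (𝓝 ϱ) → ϱ ∈ W ∩ Hplus a → S₀ ≤ s₂ - s₁) := by
  rcases hH with hm | hp
  · obtain ⟨S₀, hS₀, W, hW, hϱ0W, hWneg, hlen⟩ :=
      exists_le_length_of_tendsto_nhdsLT a hU hmet.1 hx hm.2.2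
    refine ⟨S₀, hS₀, W, hW, hϱ0W, fun _ ϱ hϱ => ⟨hϱ.2, hϱ.1.2, hWneg hϱ.1.1⟩,
      fun hp => (lt_asymm hm.2.2 hp.2.2).elim, fun γ s₁ s₂ hs hγ =>
        ⟨fun _ ϱ hlim hϱ =>
          hlen γ s₁ s₂ ϱ hs hγ (by rwa [nhdsWithin_Ioo_eq_nhdsLT hs] at hlim) hϱ.1,
          fun hp => (lt_asymm hm.2.2 hp.2.2).elim⟩⟩
  · obtain ⟨S₀, hS₀, W, hW, hϱ0W, hWpos, hlen⟩ :=
      exists_le_length_of_tendsto_nhdsGT a hU hmet.1 hx hp.2.2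
    refine ⟨S₀, hS₀, W, hW, hϱ0W, fun hm => (lt_asymm hm.2.2 hp.2.2).elim,
      fun _ ϱ hϱ => ⟨hϱ.2, hϱ.1.2, hWpos hϱ.1.1⟩, fun γ s₁ s₂ hs hγ =>
        ⟨fun hm => (lt_asymm hm.2.2 hp.2.2).elim,
          fun _ ϱ hlim hϱ =>
            hlen γ s₁ s₂ ϱ hs hγ (by rwa [nhdsWithin_Ioo_eq_nhdsGT hs] at hlim) hϱ.1⟩⟩
end
end

section
/- In the quasi-normal local model, suppose (μ, ν, f) satisfy the boundary transport equation and μ satisfies the standing support assumptions. Let ϱ ∈ H_∂⁺ ∪ H_∂⁻ be a hyperbolic boundary point with ϱ ∈ 𝒰 and Σ(ϱ) ∈ 𝒰. Then ϱ ∈ supp μ if and only if Σ(ϱ) ∈ supp μ. -/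
open MeasureTheory Filter Topology Set

noncomputable section

variable {d : ℕ}

variable (a : (Fin (d + 1) → ℝ) → Fin (d + 1) → Fin (d + 1) → ℝ)

/-!
Test the transport equation against `Q = q + q ∘ Σ`. Since `Q` is `Σ`-invariant, it takes the
same value at `ϱ'⁺` and `ϱ'⁻` and has vanishing `ζ`-derivative at `ζ = 0`, so the boundary term
drops out: `∫ dQ(H_p) dμ = ∫ f Q dμ`. Suppose `Σϱ ∉ supp μ`, and take `q = Θ · ((κφ - z)₊)²` with
bumps `Θ`, `φ` around `ϱ` so small that `q ∘ Σ` vanishes near `supp μ`. On `supp μ ⊆ {z ≥ 0}`,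
`q ≠ 0` forces `φ > 0`, hence `Θ = 1`, and there `dq(H_p) = 2 (κφ - z) (κ dφ(H_p) - H_p z)`.
Because `H_p z(ϱ) = s ≠ 0`, for small `κ` the integrand `s (f Q - dQ(H_p))` is nonnegative on
`supp μ`, and positive on the neighbourhood `{κφ > z}` of `ϱ`. Its integral is zero, so
`μ {κφ > z} = 0` and `ϱ ∉ supp μ`.
-/

open Metric

def sqPosPart (t : ℝ) : ℝ := max t 0 ^ 2

lemma sqPosPart_of_nonpos {t : ℝ} (ht : t ≤ 0) : sqPosPart t = 0 := by
  simp [sqPosPart, max_eq_right ht]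

lemma hasDerivAt_sqPosPart (t : ℝ) : HasDerivAt sqPosPart (2 * max t 0) t := by
  have off_zero : ∀ y ≠ (0 : ℝ), HasDerivAt sqPosPart (2 * max y 0) y := by
    intro y hy
    rcases hy.lt_or_gt with hy | hy
    · have h : sqPosPart =ᶠ[𝓝 y] fun _ => 0 := by
        filter_upwards [eventually_lt_nhds hy] with x hx using sqPosPart_of_nonpos hx.le
      simpa [max_eq_right hy.le] using (hasDerivAt_const y (0 : ℝ)).congr_of_eventuallyEq h
    · have h : sqPosPart =ᶠ[𝓝 y] fun x => x ^ 2 := by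
        filter_upwards [eventually_gt_nhds hy] with x hx
        simp [sqPosPart, max_eq_left hx.le]
      simpa [max_eq_left hy.le, mul_comm] using (hasDerivAt_pow 2 y).congr_of_eventuallyEq h
  rcases eq_or_ne t 0 with rfl | ht
  · exact hasDerivAt_of_hasDerivAt_of_ne off_zero (by unfold sqPosPart; fun_prop) (by fun_prop)
  · exact off_zero t ht

lemma contDiff_sqPosPart : ContDiff ℝ 1 sqPosPart := by
  refine contDiff_one_iff_deriv.2 ⟨fun t => (hasDerivAt_sqPosPart t).differentiableAt, ?_⟩
  rw [funext fun t => (hasDerivAt_sqPosPart t).deriv]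
  fun_prop

lemma reflζ_reflζ (p : Phase d) : reflζ (reflζ p) = p := by
  simp [reflζ, Function.update_idem]

lemma reflζ_add (p p' : Phase d) : reflζ (p + p') = reflζ p + reflζ p' := by
  ext i
  all_goals simp only [reflζ, Prod.fst_add, Prod.snd_add, Pi.add_apply, Function.update_apply]
  split_ifs <;> ring

lemma reflζ_smul (c : ℝ) (p : Phase d) : reflζ (c • p) = c • reflζ p := by
  ext i
  all_goals simp only [reflζ, Prod.smul_fst, Prod.smul_snd, Pi.smul_apply, Function.update_apply,
    smul_eq_mul]
  split_ifs <;> ring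

lemma reflζ_eζ : reflζ (eζ d) = -eζ d := by
  refine Prod.ext (by simp [reflζ, eζ]) (Prod.ext (by simp [reflζ, eζ])
    (Prod.ext (by simp [reflζ, eζ]) (funext fun i => ?_)))
  by_cases h : i = Fin.last d <;> simp [reflζ, eζ, h]

lemma reflζ_liftB (ϱ' : BPhase d) (ζ : ℝ) : reflζ (liftB ϱ' ζ) = liftB ϱ' (-ζ) := by
  refine Prod.ext rfl (Prod.ext rfl (Prod.ext rfl (funext fun i => ?_)))
  refine Fin.lastCases ?_ (fun j => ?_) i
  · simp [reflζ, liftB]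
  · simp [reflζ, liftB, (Fin.castSucc_lt_last j).ne]

def reflζEquiv : Phase d ≃L[ℝ] Phase d :=
  LinearEquiv.toContinuousLinearEquiv
    { toFun := reflζ
      invFun := reflζ
      map_add' := reflζ_add
      map_smul' := reflζ_smul
      left_inv := reflζ_reflζ
      right_inv := reflζ_reflζ }

@[simp]
lemma reflζEquiv_apply (p : Phase d) : reflζEquiv p = reflζ p := rfl

lemma continuous_reflζ : Continuous (reflζ : Phase d → Phase d) := reflζEquiv.continuous

def zcCLM : Phase d →L[ℝ] ℝ :=
  (ContinuousLinearMap.proj (Fin.last d)).comp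
    ((ContinuousLinearMap.fst ℝ _ _).comp (ContinuousLinearMap.snd ℝ ℝ _))

lemma coe_zcCLM : ⇑(zcCLM (d := d)) = zc := rfl

lemma continuous_zc : Continuous (zc : Phase d → ℝ) := zcCLM.continuous

lemma Hpz_eq_of_quasiNormal {U : Set (Fin (d + 1) → ℝ)} (hqn : QuasiNormal a U) {p : Phase d}
    (hx : p.2.1 ∈ U) (hz : zc p = 0) : Hpz a p = 2 * p.2.2.2 (Fin.last d) := by
  obtain ⟨hoff, hdiag⟩ := hqn p.2.1 hx hz
  rw [Hpz, Finset.sum_eq_single (Fin.last d) (fun j _ hj => by rw [hoff j hj, zero_mul])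
    (by simp), hdiag, one_mul]

lemma Hpz_reflζ_of_quasiNormal {U : Set (Fin (d + 1) → ℝ)} (hqn : QuasiNormal a U)
    {p : Phase d} (hx : p.2.1 ∈ U) (hz : zc p = 0) : Hpz a (reflζ p) = -Hpz a p := by
  rw [Hpz_eq_of_quasiNormal a hqn hx hz, Hpz_eq_of_quasiNormal a hqn (p := reflζ p) hx hz]
  simp [reflζ]

lemma continuous_qf :
    Continuous fun P : (Fin (d + 1) → Fin (d + 1) → ℝ) × (Fin (d + 1) → ℝ) => qf P.1 P.2 := by
  unfold qf; fun_prop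

def qfLinear (ξ : Fin (d + 1) → ℝ) : (Fin (d + 1) → Fin (d + 1) → ℝ) →ₗ[ℝ] ℝ where
  toFun A := qf A ξ
  map_add' A B := by simp only [qf, Pi.add_apply, add_mul, Finset.sum_add_distrib]
  map_smul' c A := by
    simp only [qf, Pi.smul_apply, smul_eq_mul, Finset.mul_sum, mul_assoc, RingHom.id_apply]

lemma fderiv_qf_comp_apply {x : Fin (d + 1) → ℝ} (hx : DifferentiableAt ℝ a x)
    (ξ v : Fin (d + 1) → ℝ) :
    fderiv ℝ (fun y => qf (a y) ξ) x v = qf (fderiv ℝ a x v) ξ := by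
  have h : (fun y => qf (a y) ξ) = LinearMap.toContinuousLinearMap (qfLinear ξ) ∘ a := rfl
  rw [h, fderiv_comp x (ContinuousLinearMap.differentiableAt _) hx, ContinuousLinearMap.fderiv]
  rfl

lemma continuousOn_Hp {U : Set (Fin (d + 1) → ℝ)} (hU : IsOpen U) (ha : ContDiffOn ℝ 1 a U) :
    ContinuousOn (Hp a) {p : Phase d | p.2.1 ∈ U} := by
  set S := {p : Phase d | p.2.1 ∈ U}
  have hx : ContinuousOn (fun p : Phase d => a p.2.1) S :=
    ha.continuousOn.comp (by fun_prop) fun p hp => hp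
  have hdx : ContinuousOn (fun p : Phase d => fderiv ℝ a p.2.1) S :=
    (ha.continuousOn_fderiv_of_isOpen hU le_rfl).comp (by fun_prop) fun p hp => hp
  have hdiff : ∀ p ∈ S, DifferentiableAt ℝ a p.2.1 := fun p hp =>
    (ha.differentiableOn one_ne_zero).differentiableAt (hU.mem_nhds hp)
  refine ContinuousOn.prodMk (by fun_prop)
    (ContinuousOn.prodMk ?_ (ContinuousOn.prodMk continuousOn_const ?_))
  · refine continuousOn_pi.2 fun i => ?_
    have hij : ∀ j, ContinuousOn (fun p : Phase d => a p.2.1 i j) S := fun j =>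
      (continuous_apply j).comp_continuousOn ((continuous_apply i).comp_continuousOn hx)
    exact continuousOn_const.mul (continuousOn_finsetSum _ fun j _ =>
      (hij j).mul (by fun_prop))
  · refine continuousOn_pi.2 fun k => ContinuousOn.congr (f := fun p : Phase d =>
      -qf (fderiv ℝ a p.2.1 (Pi.single k 1)) p.2.2.2) ?_ fun p hp => by
        simp only [fderiv_qf_comp_apply a (hdiff p hp)]
    have hk : ContinuousOn (fun p : Phase d => fderiv ℝ a p.2.1 (Pi.single k 1)) S :=
      (ContinuousLinearMap.apply ℝ _ (Pi.single k 1)).continuous.comp_continuousOn hdx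
    exact (continuous_qf.comp_continuousOn (hk.prodMk (by fun_prop))).neg

lemma continuousOn_Hpz {U : Set (Fin (d + 1) → ℝ)} (hU : IsOpen U) (ha : ContDiffOn ℝ 1 a U) :
    ContinuousOn (Hpz a) {p : Phase d | p.2.1 ∈ U} :=
  zcCLM.continuous.comp_continuousOn (continuousOn_Hp a hU ha)

lemma msupp_eq_support {α : Type*} [TopologicalSpace α] [MeasurableSpace α] (μ : Measure α) :
    msupp μ = μ.support := by
  rw [Measure.support_eq_forall_isOpen]
  exact Set.ext fun x => forall_congr' fun O => ⟨fun h hx hO => h hO hx, fun h hO hx => h hx hO⟩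

lemma integrable_of_continuousOn_of_support_subset {X : Type*} [TopologicalSpace X] [T2Space X]
    [MeasurableSpace X] [OpensMeasurableSpace X] {μ : Measure X} {g : X → ℝ} {K : Set X}
    (hK : IsCompact K) (hμK : μ K ≠ ⊤) (hg : ContinuousOn g K) (hgK : Function.support g ⊆ K) :
    Integrable g μ :=
  (integrableOn_iff_integrable_of_support_subset hgK).1
    (hg.integrableOn_of_subset_isCompact hK hK.measurableSet subset_rfl hμK)

lemma measure_eq_zero_of_integral_eq_zero {X : Type*} [MeasurableSpace X] {μ : Measure X}
    {g : X → ℝ} {W : Set X} (hg : Integrable g μ) (hg0 : ∫ x, g x ∂μ = 0) (hnn : 0 ≤ᵐ[μ] g)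
    (hpos : ∀ᵐ x ∂μ, x ∈ W → 0 < g x) : μ W = 0 := by
  have hzero : g =ᵐ[μ] 0 := (integral_eq_zero_iff_of_nonneg_ae hnn hg).1 hg0
  refine measure_eq_zero_iff_ae_notMem.2 ?_
  filter_upwards [hzero, hpos] with x hx hxW hmem
  exact (hxW hmem).ne' hx

lemma PhiFn_eq_zero_of_reflζ_invariant {Q : Phase d → ℝ} (hQ : ∀ p, Q (reflζ p) = Q p) :
    PhiFn a Q = 0 := by
  funext ϱ'
  unfold PhiFn
  split_ifs
  · rw [← reflζ_liftB, hQ, sub_self, zero_div, Pi.zero_apply]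
  · have hfix : reflζ (liftB ϱ' 0) = liftB ϱ' 0 := by rw [reflζ_liftB, neg_zero]
    have hcomp : fderiv ℝ Q (liftB ϱ' 0) = (fderiv ℝ Q (liftB ϱ' 0)).comp
        (reflζEquiv (d := d) : Phase d →L[ℝ] Phase d) := by
      have h := reflζEquiv.comp_right_fderiv (f := Q) (x := liftB ϱ' 0)
      rwa [reflζEquiv_apply, hfix, show Q ∘ reflζEquiv = Q from funext hQ] at h
    have h := congrArg (fun L => L (eζ d)) hcomp
    simp only [ContinuousLinearMap.comp_apply, ContinuousLinearEquiv.coe_coe, reflζEquiv_apply,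
      reflζ_eζ, map_neg] at h
    simp only [Pi.zero_apply]
    linarith

lemma integral_fderiv_Hp_eq_of_reflζ_invariant {𝒰 : Set (Phase d)} {μ : Measure (Phase d)}
    {ν : Measure (BPhase d)} {f : Phase d → ℝ} (hbte : BTE a 𝒰 μ ν f) {Q : Phase d → ℝ}
    (hQ : ContDiff ℝ 1 Q) (hQc : HasCompactSupport Q) (hQ𝒰 : tsupport Q ⊆ 𝒰)
    (hQinv : ∀ p, Q (reflζ p) = Q p) :
    ∫ p, fderiv ℝ Q p (Hp a p) ∂μ = ∫ p, f p * Q p ∂μ := by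
  simpa [PhiFn_eq_zero_of_reflζ_invariant a hQinv] using hbte Q hQ hQc hQ𝒰

lemma measure_eq_zero_of_reflζ_invariant {U : Set (Fin (d + 1) → ℝ)} (hU : IsOpen U)
    (ha : ContDiffOn ℝ 1 a U) {𝒰 : Set (Phase d)} (h𝒰U : 𝒰 ⊆ {p : Phase d | p.2.1 ∈ U})
    {f : Phase d → ℝ} (hf : ContinuousOn f 𝒰) {μ : Measure (Phase d)} {ν : Measure (BPhase d)}
    (hμ : RadonOn 𝒰 μ) (hbte : BTE a 𝒰 μ ν f) {Q : Phase d → ℝ} (hQ : ContDiff ℝ 1 Q)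
    (hQc : HasCompactSupport Q) (hQ𝒰 : tsupport Q ⊆ 𝒰) (hQinv : ∀ p, Q (reflζ p) = Q p)
    {s : ℝ} {W : Set (Phase d)}
    (hnn : ∀ᵐ p ∂μ, 0 ≤ s * (f p * Q p - fderiv ℝ Q p (Hp a p)))
    (hpos : ∀ᵐ p ∂μ, p ∈ W → 0 < s * (f p * Q p - fderiv ℝ Q p (Hp a p))) :
    μ W = 0 := by
  have hμQ : μ (tsupport Q) ≠ ⊤ := (hμ.2 _ hQc hQ𝒰).ne
  have hint₁ : Integrable (fun p => fderiv ℝ Q p (Hp a p)) μ := by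
    refine integrable_of_continuousOn_of_support_subset hQc hμQ
      ((hQ.continuous_fderiv one_ne_zero).continuousOn.clm_apply
        ((continuousOn_Hp a hU ha).mono (hQ𝒰.trans h𝒰U))) fun p hp => ?_
    refine support_fderiv_subset ℝ fun h => hp ?_
    simp [h]
  have hint₂ : Integrable (fun p => f p * Q p) μ :=
    integrable_of_continuousOn_of_support_subset hQc hμQ
      ((hf.mono hQ𝒰).mul hQ.continuous.continuousOn)
      (Function.support_mul_subset_right _ _ |>.trans (subset_tsupport Q))
  refine measure_eq_zero_of_integral_eq_zero ((hint₂.sub hint₁).const_mul s) ?_ hnn hpos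
  rw [integral_const_mul, Pi.sub_def, integral_sub hint₂ hint₁,
    integral_fderiv_Hp_eq_of_reflζ_invariant a hbte hQ hQc hQ𝒰 hQinv, sub_self, mul_zero]

lemma measure_eq_zero_of_sign_off_reflection {U : Set (Fin (d + 1) → ℝ)} (hU : IsOpen U)
    (ha : ContDiffOn ℝ 1 a U) {𝒰 : Set (Phase d)} (h𝒰U : 𝒰 ⊆ {p : Phase d | p.2.1 ∈ U})
    {f : Phase d → ℝ} (hf : ContinuousOn f 𝒰) {μ : Measure (Phase d)} {ν : Measure (BPhase d)}
    (hμ : RadonOn 𝒰 μ) (hbte : BTE a 𝒰 μ ν f) {q : Phase d → ℝ} (hq : ContDiff ℝ 1 q)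
    (hqc : HasCompactSupport q) {K : Set (Phase d)} (hqK : tsupport q ⊆ K) (hK𝒰 : K ⊆ 𝒰)
    (hK𝒰' : reflζ ⁻¹' K ⊆ 𝒰) (hKnull : μ (reflζ ⁻¹' K) = 0) {s : ℝ} {W : Set (Phase d)}
    (hsign : ∀ᵐ p ∂μ, 0 ≤ s * (f p * q p - fderiv ℝ q p (Hp a p)) ∧
      (p ∈ W → 0 < s * (f p * q p - fderiv ℝ q p (Hp a p)))) :
    μ W = 0 := by
  set Q : Phase d → ℝ := fun p => q p + q (reflζ p)
  have hqr : tsupport (fun p => q (reflζ p)) ⊆ reflζ ⁻¹' K :=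
    (tsupport_comp_subset_preimage q continuous_reflζ).trans (preimage_mono hqK)
  have hQq : ∀ p ∉ reflζ ⁻¹' K, Q =ᶠ[𝓝 p] q := fun p hp => by
    filter_upwards [notMem_tsupport_iff_eventuallyEq.1 fun h => hp (hqr h)] with y hy
    simp only [Q, hy, Pi.zero_apply, add_zero]
  have hsign' : ∀ᵐ p ∂μ, 0 ≤ s * (f p * Q p - fderiv ℝ Q p (Hp a p)) ∧
      (p ∈ W → 0 < s * (f p * Q p - fderiv ℝ Q p (Hp a p))) := by
    filter_upwards [hsign, measure_eq_zero_iff_ae_notMem.1 hKnull] with p hp hpK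
    rwa [(hQq p hpK).eq_of_nhds, (hQq p hpK).fderiv_eq]
  refine measure_eq_zero_of_reflζ_invariant a hU ha h𝒰U hf hμ hbte (Q := Q)
    (hq.add (hq.comp reflζEquiv.contDiff))
    (hqc.add (hqc.comp_homeomorph reflζEquiv.toHomeomorph))
    ((tsupport_add _ _).trans (union_subset (hqK.trans hK𝒰) (hqr.trans hK𝒰')))
    (fun p => by simp only [Q, reflζ_reflζ, add_comm])
    (hsign'.mono fun p hp => hp.1) (hsign'.mono fun p hp => hp.2)

lemma transport_integrand_pos {s f m h F M κ w : ℝ} (hf : |f| ≤ F) (hm : |m| ≤ M)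
    (hh : |h - s| < |s| / 4) (hw : 0 < w) (hwκ : w ≤ κ) (hκ : κ * (F + 2 * M) ≤ |s|) :
    0 < s * (f * w ^ 2 - 2 * w * (κ * m - h)) := by
  have hsf : -(|s| * F) ≤ s * f := by
    have := abs_mul s f ▸ neg_abs_le (s * f)
    nlinarith [abs_nonneg s]
  have hsm : s * m ≤ |s| * M := by
    have := abs_mul s m ▸ le_abs_self (s * m)
    nlinarith [abs_nonneg s]
  have hsh : 3 / 4 * s ^ 2 < s * h := by
    have : |s * (h - s)| < s ^ 2 / 4 := by
      rw [abs_mul, ← sq_abs s]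
      nlinarith [abs_nonneg (h - s), abs_nonneg s]
    nlinarith [neg_abs_le (s * (h - s))]
  have hsF : 0 ≤ |s| * F := mul_nonneg (abs_nonneg s) ((abs_nonneg f).trans hf)
  have hs : 0 < s ^ 2 := by nlinarith [abs_nonneg (h - s), sq_abs s, abs_nonneg s]
  nlinarith [mul_le_mul_of_nonneg_right hsf (sq_nonneg w),
    mul_le_mul_of_nonneg_left (mul_le_mul_of_nonneg_left hwκ hw.le) hsF,
    mul_le_mul_of_nonneg_left hsm (mul_nonneg hw.le (hw.le.trans hwκ)),
    mul_lt_mul_of_pos_left hsh hw,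
    mul_le_mul_of_nonneg_left (mul_le_mul_of_nonneg_left hκ (abs_nonneg s)) hw.le,
    mul_pos hw hs, sq_abs s]

section BarrierFn

def barrierFn (Θ φ : Phase d → ℝ) (κ : ℝ) (p : Phase d) : ℝ :=
  Θ p * sqPosPart (κ * φ p - zc p)

variable {Θ φ : Phase d → ℝ} {κ : ℝ}

lemma contDiff_barrierFn (hΘ : ContDiff ℝ 1 Θ) (hφ : ContDiff ℝ 1 φ) :
    ContDiff ℝ 1 (barrierFn Θ φ κ) :=
  hΘ.mul (contDiff_sqPosPart.comp ((contDiff_const.mul hφ).sub (coe_zcCLM ▸ zcCLM.contDiff)))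

lemma barrierFn_nonneg (hΘ : 0 ≤ Θ) (p : Phase d) : 0 ≤ barrierFn Θ φ κ p :=
  mul_nonneg (hΘ p) (sq_nonneg _)

lemma fderiv_barrierFn_of_nonpos (hΘ : 0 ≤ Θ) {p : Phase d} (hp : κ * φ p - zc p ≤ 0) :
    barrierFn Θ φ κ p = 0 ∧ fderiv ℝ (barrierFn Θ φ κ) p = 0 := by
  have hzero : barrierFn Θ φ κ p = 0 := by rw [barrierFn, sqPosPart_of_nonpos hp, mul_zero]
  refine ⟨hzero, IsLocalMin.fderiv_eq_zero (Eventually.of_forall fun y => ?_)⟩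
  rw [hzero]
  exact barrierFn_nonneg hΘ y

lemma hasFDerivAt_barrierFn_of_eventuallyEq_one {p : Phase d} (hΘ : Θ =ᶠ[𝓝 p] 1)
    (hφ : DifferentiableAt ℝ φ p) :
    HasFDerivAt (barrierFn Θ φ κ)
      ((2 * max (κ * φ p - zc p) 0) • (κ • fderiv ℝ φ p - zcCLM)) p := by
  have hw : HasFDerivAt (fun y => κ * φ y - zc y) (κ • fderiv ℝ φ p - zcCLM) p :=
    (hφ.hasFDerivAt.const_mul κ).sub (coe_zcCLM ▸ zcCLM.hasFDerivAt)
  refine ((hasDerivAt_sqPosPart _).comp_hasFDerivAt p hw).congr_of_eventuallyEq ?_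
  filter_upwards [hΘ] with y hy
  simp [barrierFn, hy]

lemma barrierFn_transport_sign (f : Phase d → ℝ) {F M s : ℝ} {K : Set (Phase d)}
    (hΘ : 0 ≤ Θ) (hφd : Differentiable ℝ φ) (hφ1 : ∀ p, φ p ≤ 1)
    (hφK : ∀ p, 0 < φ p → Θ =ᶠ[𝓝 p] 1 ∧ p ∈ K) (hfK : ∀ p ∈ K, |f p| ≤ F)
    (hMK : ∀ p ∈ K, |fderiv ℝ φ p (Hp a p)| ≤ M) (hsK : ∀ p ∈ K, |Hpz a p - s| < |s| / 4)
    (hκ : 0 < κ) (hκs : κ * (F + 2 * M) ≤ |s|) {p : Phase d} (hz : 0 ≤ zc p) :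
    0 ≤ s * (f p * barrierFn Θ φ κ p - fderiv ℝ (barrierFn Θ φ κ) p (Hp a p)) ∧
      (0 < κ * φ p - zc p →
        0 < s * (f p * barrierFn Θ φ κ p - fderiv ℝ (barrierFn Θ φ κ) p (Hp a p))) := by
  by_cases hw : 0 < κ * φ p - zc p
  · have hφp : 0 < φ p := pos_of_mul_pos_right (by linarith) hκ.le
    obtain ⟨hΘp, hpK⟩ := hφK p hφp
    have hval : barrierFn Θ φ κ p = (κ * φ p - zc p) ^ 2 := by
      simp [barrierFn, hΘp.eq_of_nhds, sqPosPart, max_eq_left hw.le]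
    have key := transport_integrand_pos (hfK p hpK) (hMK p hpK) (hsK p hpK) hw
      (by nlinarith [hφ1 p]) hκs
    rw [hval, (hasFDerivAt_barrierFn_of_eventuallyEq_one hΘp (hφd p)).fderiv]
    simp only [smul_apply, sub_apply, smul_eq_mul, max_eq_left hw.le]
    exact ⟨key.le, fun _ => key⟩
  · obtain ⟨hval, hder⟩ := fderiv_barrierFn_of_nonpos hΘ (not_lt.1 hw)
    simp [hval, hder, hw]

end BarrierFn

lemma exists_nhds_measure_zero_of_reflζ_ball {U : Set (Fin (d + 1) → ℝ)} (hU : IsOpen U)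
    (ha : ContDiffOn ℝ 1 a U) {𝒰 : Set (Phase d)} (h𝒰U : 𝒰 ⊆ {p : Phase d | p.2.1 ∈ U})
    {f : Phase d → ℝ} (hf : ContinuousOn f 𝒰) {μ : Measure (Phase d)} {ν : Measure (BPhase d)}
    (hμ : RadonOn 𝒰 μ) (hbte : BTE a 𝒰 μ ν f) (hzμ : ∀ p ∈ msupp μ, 0 ≤ zc p)
    {p₁ : Phase d} (hz : zc p₁ = 0) {R s : ℝ} (hR : 0 < R) (hR𝒰 : closedBall p₁ R ⊆ 𝒰)
    (hRr𝒰 : reflζ ⁻¹' closedBall p₁ R ⊆ 𝒰) (hRnull : μ (reflζ ⁻¹' closedBall p₁ R) = 0)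
    (hHpz : ∀ p ∈ closedBall p₁ R, |Hpz a p - s| < |s| / 4) :
    ∃ W ∈ 𝓝 p₁, μ W = 0 := by
  let Θ : ContDiffBump p₁ := ⟨R / 2, R, by positivity, by linarith⟩
  let φ : ContDiffBump p₁ := ⟨R / 4, R / 2, by positivity, by linarith⟩
  have hK := isCompact_closedBall p₁ R
  have hp₁K : p₁ ∈ closedBall p₁ R := mem_closedBall_self hR.le
  have hs : 0 < |s| := by linarith [abs_nonneg (Hpz a p₁ - s), hHpz p₁ hp₁K]
  obtain ⟨F, hF⟩ := hK.exists_bound_of_continuousOn (hf.mono hR𝒰)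
  obtain ⟨M, hM⟩ := hK.exists_bound_of_continuousOn (f := fun p => fderiv ℝ φ p (Hp a p))
    ((φ.contDiff.continuous_fderiv one_ne_zero).continuousOn.clm_apply
      ((continuousOn_Hp a hU ha).mono (hR𝒰.trans h𝒰U)))
  have hF0 : 0 ≤ F := (norm_nonneg _).trans (hF p₁ hp₁K)
  have hM0 : 0 ≤ M := (norm_nonneg _).trans (hM p₁ hp₁K)
  set κ := |s| / (F + 2 * M + 1)
  have hκ : 0 < κ := by positivity
  have hκs : κ * (F + 2 * M) ≤ |s| := by
    rw [div_mul_eq_mul_div, div_le_iff₀ (by positivity)]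
    nlinarith
  have hφK : ∀ p, 0 < φ p → Θ =ᶠ[𝓝 p] 1 ∧ p ∈ closedBall p₁ R := fun p hp => by
    have hpb : p ∈ ball p₁ (R / 2) := φ.support_eq ▸ hp.ne'
    exact ⟨Θ.eventuallyEq_one_of_mem_ball hpb,
      ball_subset_closedBall (ball_subset_ball (by linarith) hpb)⟩
  refine ⟨{p | 0 < κ * φ p - zc p}, (isOpen_lt continuous_const
    ((continuous_const.mul φ.continuous).sub continuous_zc)).mem_nhds ?_, ?_⟩
  · show 0 < κ * φ p₁ - zc p₁
    rw [φ.one_of_mem_closedBall (mem_closedBall_self (by positivity)), hz]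
    linarith
  refine measure_eq_zero_of_sign_off_reflection a hU ha h𝒰U hf hμ hbte
    (contDiff_barrierFn (κ := κ) Θ.contDiff φ.contDiff) Θ.hasCompactSupport.mul_right
    ((tsupport_mul_subset_left).trans Θ.tsupport_eq.le) hR𝒰 hRr𝒰 hRnull (s := s) ?_
  filter_upwards [msupp_eq_support μ ▸ Measure.support_mem_ae] with p hp
  exact barrierFn_transport_sign a f (fun p => Θ.nonneg) (φ.contDiff.differentiable one_ne_zero)
    (fun p => φ.le_one) hφK (fun p hp => hF p hp) (fun p hp => hM p hp) hHpz hκ hκs (hzμ p hp)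

lemma reflζ_mem_msupp_of_mem {U : Set (Fin (d + 1) → ℝ)} (hU : IsOpen U)
    (ha : ContDiffOn ℝ 1 a U) {𝒰 : Set (Phase d)} (h𝒰 : IsOpen 𝒰)
    (h𝒰U : 𝒰 ⊆ {p : Phase d | p.2.1 ∈ U}) {f : Phase d → ℝ} (hf : ContinuousOn f 𝒰)
    {μ : Measure (Phase d)} {ν : Measure (BPhase d)} (hμ : RadonOn 𝒰 μ) (hbte : BTE a 𝒰 μ ν f)
    (hzμ : ∀ p ∈ msupp μ, 0 ≤ zc p) (p₁ : Phase d) (hp₁ : p₁ ∈ 𝒰) (hrp₁ : reflζ p₁ ∈ 𝒰)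
    (hz : zc p₁ = 0) (hs : Hpz a p₁ ≠ 0) (hmem : p₁ ∈ msupp μ) : reflζ p₁ ∈ msupp μ := by
  by_contra hnot
  obtain ⟨O, hO, hμO⟩ := Measure.notMem_support_iff_exists.1 (msupp_eq_support μ ▸ hnot)
  have hHpz := (continuousOn_Hpz a hU ha).continuousAt (mem_of_superset (h𝒰.mem_nhds hp₁) h𝒰U)
  have hV : 𝒰 ∩ Hpz a ⁻¹' ball (Hpz a p₁) (|Hpz a p₁| / 4) ∩ reflζ ⁻¹' (𝒰 ∩ O) ∈ 𝓝 p₁ :=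
    inter_mem (inter_mem (h𝒰.mem_nhds hp₁)
      (hHpz.preimage_mem_nhds (ball_mem_nhds _ (by positivity))))
      (continuous_reflζ.continuousAt.preimage_mem_nhds (inter_mem (h𝒰.mem_nhds hrp₁) hO))
  obtain ⟨R, hR, hRV⟩ := nhds_basis_closedBall.mem_iff.1 hV
  have hRr : reflζ ⁻¹' closedBall p₁ R ⊆ 𝒰 ∩ O := fun p hp => by
    simpa only [mem_preimage, reflζ_reflζ] using (hRV hp).2
  obtain ⟨W, hW, hμW⟩ := exists_nhds_measure_zero_of_reflζ_ball a hU ha h𝒰U hf hμ hbte hzμ hz hR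
    (fun p hp => (hRV hp).1.1) (fun p hp => (hRr hp).1)
    (measure_mono_null (fun p hp => (hRr hp).2) hμO) (fun p hp => (hRV hp).1.2)
  exact ((Measure.mem_support_iff_forall p₁).1 (msupp_eq_support μ ▸ hmem) W hW).ne' hμW

theorem stmt10 (U : Set (Fin (d + 1) → ℝ)) (hU : IsOpen U)
    (hmet : MetricHyp a U) (hqn : QuasiNormal a U)
    (𝒰 : Set (Phase d)) (h𝒰 : IsOpen 𝒰) (h𝒰U : 𝒰 ⊆ {ϱ : Phase d | ϱ.2.1 ∈ U})
    (f : Phase d → ℝ) (hf : ContinuousOn f 𝒰)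
    (μ : Measure (Phase d)) (ν : Measure (BPhase d))
    (hμ : RadonOn 𝒰 μ)
    (hbte : BTE a 𝒰 μ ν f) (hstand : StandingSupp a μ)
    (ϱ : Phase d) (hϱH : ϱ ∈ Hplus a ∪ Hminus a)
    (hϱ𝒰 : ϱ ∈ 𝒰) (hrϱ𝒰 : reflζ ϱ ∈ 𝒰) :
    ϱ ∈ msupp μ ↔ reflζ ϱ ∈ msupp μ := by
  have hz : zc ϱ = 0 := hϱH.elim (·.1) (·.1)
  have hs : Hpz a ϱ ≠ 0 := hϱH.elim (·.2.2.ne') (·.2.2.ne)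
  have hrs : Hpz a (reflζ ϱ) ≠ 0 := by
    rw [Hpz_reflζ_of_quasiNormal a hqn (h𝒰U hϱ𝒰) hz]
    exact neg_ne_zero.2 hs
  have key := reflζ_mem_msupp_of_mem a hU hmet.1 h𝒰 h𝒰U hf hμ hbte fun p hp => (hstand.1 hp).2
  refine ⟨key ϱ hϱ𝒰 hrϱ𝒰 hz hs, fun h => ?_⟩
  simpa only [reflζ_reflζ] using key (reflζ ϱ) hrϱ𝒰 (by rwa [reflζ_reflζ]) hz hrs h
end
end
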